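/- arXiv:2503.19432 — 2 statements merged into one kernel-verified Lean document; each statement's English description precedes it below -/
import Mathlib

section
/- Let L₀ > 8r₀. If n-particle cubes Λ_{L_k}^{(n)}(u), Λ_{L_k}^{(n)}(v) (k ≥ 0) are both fully interactive and ‖u−v‖ ≥ 11nL_k, then these cubes are completely separable, and the random operators H^{(n)}_{Λ_{L_k}^{(n)}(u)} and H^{(n)}_{Λ_{L_k}^{(n)}(v)} are independent. -/
open MeasureTheory ProbabilityTheory

namespace MP

/-- A point of the single-particle lattice `ℤ^d`. -/
abbrev Pt (d : ℕ) := Fin d → ℤ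

/-- A configuration of `n` particles in `ℤ^d`, i.e. a point of `ℤ^{nd}`. -/
abbrev Cfg (n d : ℕ) := Fin n → Pt d

/-- The max-norm `‖x‖ = max_i |x_i|` on `ℤ^d`. -/
def ptNorm {d : ℕ} (x : Pt d) : ℕ := Finset.univ.sup fun i => (x i).natAbs

/-- The max-norm `‖x‖ = max_j ‖x_j‖` on `ℤ^{nd}`. -/
def cfgNorm {n d : ℕ} (x : Cfg n d) : ℕ := Finset.univ.sup fun j => ptNorm (x j)

/-- `⟨x⟩ = max {1, ‖x‖}`. -/
def jap {n d : ℕ} (x : Cfg n d) : ℕ := max 1 (cfgNorm x)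

/-- The `n`-particle cube of radius `L` centered at `u`. -/
noncomputable def cube {n d : ℕ} (L : ℕ) (u : Cfg n d) : Finset (Cfg n d) :=
  Finset.Icc (fun j i => u j i - (L : ℤ)) (fun j i => u j i + (L : ℤ))

/-- Partial projection `Π_J Λ = ∪_{j∈J} Π_j Λ ⊆ ℤ^d`. -/
def projJ {n d : ℕ} (J : Finset (Fin n)) (Λ : Finset (Cfg n d)) : Finset (Pt d) :=
  J.biUnion fun j => Λ.image fun x => x j

/-- Full projection `ΠΛ = ∪_{j=1}^n Π_j Λ ⊆ ℤ^d`. -/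
def projFull {n d : ℕ} (Λ : Finset (Cfg n d)) : Finset (Pt d) := projJ Finset.univ Λ

/-- Weak separability of the pair of `n`-particle cubes `Λ_L(u)`, `Λ_L(v)`. -/
def WeaklySeparable {n d : ℕ} (r0 L : ℕ) (u v : Cfg n d) : Prop :=
  ∃ J : Finset (Fin n), J.Nonempty ∧
    (projJ J (cube (L + r0) u) ∩
        (projJ Jᶜ (cube (L + r0) u) ∪ projFull (cube (L + r0) v)) = ∅ ∨
      projJ J (cube (L + r0) v) ∩
        (projJ Jᶜ (cube (L + r0) v) ∪ projFull (cube (L + r0) u)) = ∅)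

/-- Separability: weak separability together with `‖u - v‖ > 11 n L`. -/
def Separable {n d : ℕ} (r0 L : ℕ) (u v : Cfg n d) : Prop :=
  WeaklySeparable r0 L u v ∧ 11 * n * L < cfgNorm (u - v)

/-- Complete separability: disjoint full projections of the `(L+r₀)`-cubes. -/
def CompletelySeparable {n d : ℕ} (r0 L : ℕ) (u v : Cfg n d) : Prop :=
  projFull (cube (L + r0) u) ∩ projFull (cube (L + r0) v) = ∅

/-- Distance `dist(u, 𝔻₀) = min_{x ∈ ℤ^d} max_j ‖u_j - x‖` to the diagonal. -/
noncomputable def diagDist {n d : ℕ} (u : Cfg n d) : ℕ :=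
  sInf {m : ℕ | ∃ x : Pt d, ∀ j, ptNorm (u j - x) ≤ m}

/-- Fully interactive cube. -/
def IsFI {n d : ℕ} (r0 L : ℕ) (u : Cfg n d) : Prop := diagDist u ≤ 2 * n * (L + r0)

/-- Partially interactive cube. -/
def IsPI {n d : ℕ} (r0 L : ℕ) (u : Cfg n d) : Prop := ¬ IsFI r0 L u

/-- The power-law long-range hopping kernel (Assumption A):
`T(x,y) = ⟨y_j - x_j⟩^{-r}` if `x_i = y_i` for all `i ≠ j`, and `0` otherwise. -/
noncomputable def hopT {n d : ℕ} (r : ℝ) (x y : Cfg n d) : ℝ :=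
  if h : ∃ j, ∀ i, i ≠ j → x i = y i then
    ((max 1 (ptNorm (y h.choose - x h.choose)) : ℕ) : ℝ) ^ (-r)
  else 0

/-- The total interaction `U(x) = ∑_{j₁ < j₂} U(x_{j₁}, x_{j₂})` (Assumption B). -/
def pairU {n d : ℕ} (U : Pt d → Pt d → ℝ) (x : Cfg n d) : ℝ :=
  ∑ p ∈ Finset.univ.filter (fun p : Fin n × Fin n => p.1 < p.2), U (x p.1) (x p.2)

/-- The `n`-particle Hamiltonian kernel
`H(x,y) = g⁻¹ (T(x,y) + δ_{xy} U(x)) + δ_{xy} ∑_j v(x_j)`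
for a fixed realization `v : ℤ^d → ℝ` of the potential. -/
noncomputable def ham {n d : ℕ} (g r : ℝ) (U : Pt d → Pt d → ℝ) (v : Pt d → ℝ)
    (x y : Cfg n d) : ℝ :=
  (1 / g) * (hopT r x y + if x = y then pairU U x else 0) +
    (if x = y then ∑ j, v (x j) else 0)

/-- `G` is the Green's function `(H_Λ - E)⁻¹` of the restriction of `H` to `Λ`
with Dirichlet boundary conditions. -/
def IsGreen {n d : ℕ} (Λ : Finset (Cfg n d)) (H : Cfg n d → Cfg n d → ℝ) (E : ℝ)
    (G : Cfg n d → Cfg n d → ℝ) : Prop :=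
  (∀ x y, (x ∉ Λ ∨ y ∉ Λ) → G x y = 0) ∧
  (∀ x ∈ Λ, ∀ y ∈ Λ,
    ∑ z ∈ Λ, (H x z - if x = z then E else 0) * G z y = if x = y then 1 else 0) ∧
  (∀ x ∈ Λ, ∀ y ∈ Λ,
    ∑ z ∈ Λ, G x z * (H z y - if z = y then E else 0) = if x = y then 1 else 0)

/-- `E` belongs to the spectrum of `H_Λ`, i.e. `H_Λ - E` is not invertible. -/
def SingE {n d : ℕ} (Λ : Finset (Cfg n d)) (H : Cfg n d → Cfg n d → ℝ) (E : ℝ) : Prop :=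
  ¬ ∃ G, IsGreen Λ H E G

/-- Sobolev norm of a kernel supported on `Λ × Λ`:
`‖K‖_s² = C₀ ∑_{v} (sup_{x-y=v} |K(x,y)|)² ⟨v⟩^{2s}`. -/
noncomputable def sobNorm {n d : ℕ} (C0 : ℝ) (Λ : Finset (Cfg n d))
    (K : Cfg n d → Cfg n d → ℝ) (s : ℝ) : ℝ :=
  Real.sqrt (C0 * ∑ v ∈ (Λ ×ˢ Λ).image (fun p => p.1 - p.2),
    ((((Λ ×ˢ Λ).filter (fun p => p.1 - p.2 = v)).sup
        (fun p => ‖K p.1 p.2‖₊) : NNReal) : ℝ) ^ 2 * ((jap v : ℕ) : ℝ) ^ (2 * s))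

/-- `Λ` (a cube of radius `L`) is `(E,δ)`-nonsingular: the Green's function exists and
`‖G_Λ(E)‖_s ≤ L^{τ + δ s}` for all `s ∈ [s₀, r_n]`. -/
def IsNS {n d : ℕ} (C0 τ δ s0 rn : ℝ) (L : ℕ) (Λ : Finset (Cfg n d))
    (H : Cfg n d → Cfg n d → ℝ) (E : ℝ) : Prop :=
  ∃ G, IsGreen Λ H E G ∧
    ∀ s : ℝ, s0 ≤ s → s ≤ rn → sobNorm C0 Λ G s ≤ (L : ℝ) ^ (τ + δ * s)

/-- `Λ` (a cube of radius `L`) is `E`-resonant: `dist(E, σ(H_Λ)) < L^{-β}`. -/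
def IsER {n d : ℕ} (β : ℝ) (L : ℕ) (Λ : Finset (Cfg n d))
    (H : Cfg n d → Cfg n d → ℝ) (E : ℝ) : Prop :=
  ∃ E' : ℝ, SingE Λ H E' ∧ |E - E'| < (L : ℝ) ^ (-β)

/-- The scales `L_k = L₀^{4^k}`. -/
def Lscale (L0 k : ℕ) : ℕ := L0 ^ (4 ^ k)

/-- `p^{(m)} = 18^{N-m} p₀`. -/
def pexp (N : ℕ) (p0 : ℝ) (m : ℕ) : ℝ := 18 ^ (N - m) * p0

/-- The energy interval `I = [-MN-1, MN+1]`. -/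
def Ibox (M : ℝ) (N : ℕ) : Set ℝ := Set.Icc (-(M * N) - 1) (M * N + 1)

/-- Property `(SS.N.I.k.n)` at scale `Lk`: for every pair of separable `n`-particle
cubes of radius `Lk`, the probability that for some `E ∈ I` both cubes are
`(E,1/2)`-singular is `< Lk^{-2 p^{(n)}}`. -/
def SSprop {d : ℕ} (n : ℕ) {Ω : Type} [MeasurableSpace Ω] (P : Measure Ω)
    (V : Pt d → Ω → ℝ) (g r : ℝ) (U : Pt d → Pt d → ℝ) (C0 : ℝ)
    (τ s0 rn : ℝ) (I : Set ℝ) (r0 Lk : ℕ) (pn : ℝ) : Prop :=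
  ∀ u v : Cfg n d, Separable r0 Lk u v →
    P {ω | ∃ E ∈ I,
        ¬ IsNS C0 τ (1/2) s0 rn Lk (cube Lk u) (ham g r U fun a => V a ω) E ∧
        ¬ IsNS C0 τ (1/2) s0 rn Lk (cube Lk v) (ham g r U fun a => V a ω) E} <
      ENNReal.ofReal ((Lk : ℝ) ^ (-(2 * pn)))

/-- The cube `Λ_{Lk1}(u)` is `(1/2, I)`-tunneling: it contains two separable
`(E,1/2)`-singular cubes of radius `Lk` for some `E ∈ I`. -/
def IsT {n d : ℕ} (C0 τ s0 rn : ℝ) (I : Set ℝ) (g r : ℝ) (U : Pt d → Pt d → ℝ)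
    (v : Pt d → ℝ) (r0 Lk Lk1 : ℕ) (u : Cfg n d) : Prop :=
  ∃ E ∈ I, ∃ x y : Cfg n d,
    cube Lk x ⊆ cube Lk1 u ∧ cube Lk y ⊆ cube Lk1 u ∧ Separable r0 Lk x y ∧
    ¬ IsNS C0 τ (1/2) s0 rn Lk (cube Lk x) (ham g r U v) E ∧
    ¬ IsNS C0 τ (1/2) s0 rn Lk (cube Lk y) (ham g r U v) E

/-- Restriction of a kernel to `Λ × Λ`. -/
def restrictKer {n d : ℕ} (Λ : Finset (Cfg n d)) (K : Cfg n d → Cfg n d → ℝ) :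
    Cfg n d → Cfg n d → ℝ :=
  fun x y => if x ∈ Λ ∧ y ∈ Λ then K x y else 0

/-- Continuity modulus `ς(ε) = sup_t (μ(t+ε] - μ(t])` of the distribution function of `μ`. -/
noncomputable def contMod (μ : Measure ℝ) (ε : ℝ) : ℝ :=
  ⨆ t : ℝ, (μ (Set.Ioc t (t + ε))).toReal

/-!
If a site `p` lay in both projections, it would be within `L + r₀` of some `u_i` and of some
`v_{i'}`. Full interactivity puts all `u_j` within `2n(L + r₀)` of a single site (likewise for
`v`), so `‖u - v‖ ≤ (8n + 2)(L + r₀) < 11nL` because `L > 8r₀` and `n ≥ 2`; for `n = 1` the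
distance to the diagonal vanishes and the bound is `2(L + r₀)`. Once the projections are
disjoint, the two restricted Hamiltonians are functions of the IID potential on disjoint sets of
sites, hence independent.
-/

lemma ptNorm_le_iff {d : ℕ} {x : Pt d} {M : ℕ} :
    ptNorm x ≤ M ↔ ∀ i, (x i).natAbs ≤ M := by
  simp [ptNorm, Finset.sup_le_iff]

lemma cfgNorm_le_iff {n d : ℕ} {x : Cfg n d} {M : ℕ} :
    cfgNorm x ≤ M ↔ ∀ j, ptNorm (x j) ≤ M := by
  simp [cfgNorm, Finset.sup_le_iff]

lemma natAbs_le_ptNorm {d : ℕ} (x : Pt d) (i : Fin d) : (x i).natAbs ≤ ptNorm x :=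
  Finset.le_sup (f := fun i => (x i).natAbs) (Finset.mem_univ i)

lemma ptNorm_sub_comm {d : ℕ} (a b : Pt d) : ptNorm (a - b) = ptNorm (b - a) := by
  simp only [ptNorm, Pi.sub_apply, ← Int.natAbs_neg (b _ - a _), neg_sub]

lemma ptNorm_sub_le_add {d : ℕ} (a b c : Pt d) :
    ptNorm (a - c) ≤ ptNorm (a - b) + ptNorm (b - c) := by
  rw [ptNorm_le_iff]
  intro i
  have hab := natAbs_le_ptNorm (a - b) i
  have hbc := natAbs_le_ptNorm (b - c) i
  simp only [Pi.sub_apply] at hab hbc ⊢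
  omega

lemma mem_cube_iff {n d : ℕ} {L : ℕ} {u x : Cfg n d} :
    x ∈ cube L u ↔ ∀ j, ptNorm (x j - u j) ≤ L := by
  simp only [cube, Finset.mem_Icc, Pi.le_def, ptNorm_le_iff, Pi.sub_apply]
  constructor
  · rintro ⟨hlo, hhi⟩ j i
    have := hlo j i
    have := hhi j i
    omega
  · intro h
    exact ⟨fun j i => by have := h j i; omega, fun j i => by have := h j i; omega⟩

lemma cube_mono {n d : ℕ} {L M : ℕ} (h : L ≤ M) (u : Cfg n d) : cube L u ⊆ cube M u :=
  fun _ hx => mem_cube_iff.mpr fun j => (mem_cube_iff.mp hx j).trans h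

lemma mem_projFull {n d : ℕ} {Λ : Finset (Cfg n d)} {p : Pt d} :
    p ∈ projFull Λ ↔ ∃ j, ∃ x ∈ Λ, x j = p := by
  simp [projFull, projJ]

lemma projFull_mono {n d : ℕ} {Λ Λ' : Finset (Cfg n d)} (h : Λ ⊆ Λ') :
    projFull Λ ⊆ projFull Λ' := by
  intro p hp
  obtain ⟨j, x, hx, rfl⟩ := mem_projFull.mp hp
  exact mem_projFull.mpr ⟨j, x, h hx, rfl⟩

lemma exists_ptNorm_sub_le_of_mem_projFull_cube {n d : ℕ} {L : ℕ} {u : Cfg n d} {p : Pt d}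
    (hp : p ∈ projFull (cube L u)) : ∃ j, ptNorm (p - u j) ≤ L := by
  obtain ⟨j, x, hx, rfl⟩ := mem_projFull.mp hp
  exact ⟨j, mem_cube_iff.mp hx j⟩

lemma exists_forall_ptNorm_sub_le_diagDist {n d : ℕ} (u : Cfg n d) :
    ∃ x : Pt d, ∀ j, ptNorm (u j - x) ≤ diagDist u :=
  Nat.sInf_mem (s := {m : ℕ | ∃ x : Pt d, ∀ j, ptNorm (u j - x) ≤ m})
    ⟨cfgNorm u, 0, fun j => by simpa using cfgNorm_le_iff.mp le_rfl j⟩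

lemma diagDist_eq_zero {n d : ℕ} [Subsingleton (Fin n)] (u : Cfg n d) : diagDist u = 0 := by
  refine Nat.eq_zero_of_le_zero (Nat.sInf_le
    (show 0 ∈ {m : ℕ | ∃ x : Pt d, ∀ j, ptNorm (u j - x) ≤ m} from ?_))
  rcases isEmpty_or_nonempty (Fin n) with hn | hn
  · exact ⟨0, fun j => isEmptyElim j⟩
  · obtain ⟨i⟩ := hn
    exact ⟨u i, fun j => by simp [Subsingleton.elim j i, ptNorm]⟩

lemma ptNorm_sub_le_two_mul_diagDist {n d : ℕ} (u : Cfg n d) (i j : Fin n) :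
    ptNorm (u i - u j) ≤ 2 * diagDist u := by
  obtain ⟨x, hx⟩ := exists_forall_ptNorm_sub_le_diagDist u
  calc ptNorm (u i - u j) ≤ ptNorm (u i - x) + ptNorm (x - u j) := ptNorm_sub_le_add _ _ _
    _ ≤ 2 * diagDist u := by rw [ptNorm_sub_comm x]; linarith [hx i, hx j]

lemma cfgNorm_sub_le_of_mem_projFull_cube {n d : ℕ} {L : ℕ} {u v : Cfg n d} {p : Pt d}
    (hu : p ∈ projFull (cube L u)) (hv : p ∈ projFull (cube L v)) :
    cfgNorm (u - v) ≤ 2 * diagDist u + 2 * diagDist v + 2 * L := by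
  obtain ⟨i, hi⟩ := exists_ptNorm_sub_le_of_mem_projFull_cube hu
  obtain ⟨i', hi'⟩ := exists_ptNorm_sub_le_of_mem_projFull_cube hv
  refine cfgNorm_le_iff.mpr fun j => ?_
  calc ptNorm (u j - v j)
      ≤ ptNorm (u j - u i) + ptNorm (u i - p) + ptNorm (p - v i') + ptNorm (v i' - v j) := by
        linarith [ptNorm_sub_le_add (u j) (u i) (v j), ptNorm_sub_le_add (u i) p (v j),
          ptNorm_sub_le_add p (v i') (v j)]
    _ ≤ 2 * diagDist u + 2 * diagDist v + 2 * L := by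
        rw [ptNorm_sub_comm (u i)]
        linarith [ptNorm_sub_le_two_mul_diagDist u j i, ptNorm_sub_le_two_mul_diagDist v i' j]

theorem completelySeparable_of_isFI {n d : ℕ} {r0 L : ℕ} {u v : Cfg n d} (hL : 8 * r0 < L)
    (hu : IsFI r0 L u) (hv : IsFI r0 L v) (hdist : 11 * n * L ≤ cfgNorm (u - v)) :
    CompletelySeparable r0 L u v := by
  refine Finset.eq_empty_iff_forall_notMem.mpr fun p hp => ?_
  obtain ⟨hpu, hpv⟩ := Finset.mem_inter.mp hp
  have hbound := cfgNorm_sub_le_of_mem_projFull_cube hpu hpv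
  obtain ⟨j, -⟩ := exists_ptNorm_sub_le_of_mem_projFull_cube hpu
  rcases Nat.lt_or_ge n 2 with hn | hn
  · obtain rfl : n = 1 := by have := j.pos; omega
    simp only [diagDist_eq_zero] at hbound
    omega
  · unfold IsFI at hu hv
    nlinarith

lemma restrictKer_ham_congr {n d : ℕ} (g r : ℝ) (U : Pt d → Pt d → ℝ)
    (Λ : Finset (Cfg n d)) {v v' : Pt d → ℝ} (h : ∀ a ∈ projFull Λ, v a = v' a) :
    restrictKer Λ (ham g r U v) = restrictKer Λ (ham g r U v') := by
  funext x y
  unfold restrictKer ham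
  split_ifs with hxy hxy' <;> try rfl
  subst hxy'
  congr 1
  exact Finset.sum_congr rfl fun j _ => h _ (mem_projFull.mpr ⟨j, x, hxy.1, rfl⟩)

lemma measurable_restrictKer_ham {n d : ℕ} (g r : ℝ) (U : Pt d → Pt d → ℝ)
    (Λ : Finset (Cfg n d)) (S : Finset (Pt d)) :
    Measurable fun w : S → ℝ =>
      restrictKer Λ (ham g r U fun a => if h : a ∈ S then w ⟨a, h⟩ else 0) := by
  refine measurable_pi_lambda _ fun x => measurable_pi_lambda _ fun y => ?_
  unfold restrictKer ham
  split_ifs <;> try fun_prop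
  refine measurable_const.add (Finset.measurable_sum _ fun j _ => ?_)
  dsimp only
  split_ifs <;> fun_prop

theorem indepFun_restrictKer_ham {n d : ℕ} {Ω : Type*} [MeasurableSpace Ω] {P : Measure Ω}
    {V : Pt d → Ω → ℝ} (hV : ∀ a, Measurable (V a)) (hiid : iIndepFun V P)
    (g r : ℝ) (U : Pt d → Pt d → ℝ) {Λ Λ' : Finset (Cfg n d)}
    (hΛ : Disjoint (projFull Λ) (projFull Λ')) :
    IndepFun (fun ω => restrictKer Λ (ham g r U fun a => V a ω))
      (fun ω => restrictKer Λ' (ham g r U fun a => V a ω)) P := by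
  have hfactor : ∀ Λ : Finset (Cfg n d),
      (fun ω => restrictKer Λ (ham g r U fun a => V a ω)) =
        (fun w : projFull Λ → ℝ =>
          restrictKer Λ (ham g r U fun a => if h : a ∈ projFull Λ then w ⟨a, h⟩ else 0)) ∘
        fun ω (a : projFull Λ) => V a ω :=
    fun Λ => funext fun ω => restrictKer_ham_congr g r U Λ fun a ha => by simp [ha]
  rw [hfactor Λ, hfactor Λ']
  exact (hiid.indepFun_finset _ _ hΛ hV).comp
    (measurable_restrictKer_ham g r U Λ _) (measurable_restrictKer_ham g r U Λ' _)

theorem statement11_general {d : ℕ}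
    (n : ℕ)
    {Ω : Type} [MeasurableSpace Ω] (P : Measure Ω)
    (V : Pt d → Ω → ℝ) (hVmeas : ∀ a, Measurable (V a))
    (hiid : iIndepFun V P)
    (U : Pt d → Pt d → ℝ) (r0 : ℕ)
    (g r : ℝ)
    (L0 : ℕ) (hL0 : 8 * r0 < L0) (k : ℕ) (u v : Cfg n d)
    (hFIu : IsFI r0 (Lscale L0 k) u) (hFIv : IsFI r0 (Lscale L0 k) v)
    (hdist : 11 * n * Lscale L0 k ≤ cfgNorm (u - v)) :
    CompletelySeparable r0 (Lscale L0 k) u v ∧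
    IndepFun
      (fun ω => restrictKer (cube (Lscale L0 k) u) (ham g r U fun a => V a ω))
      (fun ω => restrictKer (cube (Lscale L0 k) v) (ham g r U fun a => V a ω)) P := by
  have hL : 8 * r0 < Lscale L0 k := hL0.trans_le (Nat.le_self_pow (by positivity) L0)
  have hCS := completelySeparable_of_isFI hL hFIu hFIv hdist
  refine ⟨hCS, indepFun_restrictKer_ham hVmeas hiid g r U ?_⟩
  exact (Finset.disjoint_iff_inter_eq_empty.mpr hCS).mono
    (projFull_mono (cube_mono (Nat.le_add_right _ r0) u))
    (projFull_mono (cube_mono (Nat.le_add_right _ r0) v))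

/-- Lemma 3.7: if `L₀ > 8r₀` and the FI cubes `Λ_{L_k}(u)`, `Λ_{L_k}(v)`
satisfy `‖u-v‖ ≥ 11 n L_k`, then they are completely separable and the restricted random
operators `H_{Λ_{L_k}(u)}` and `H_{Λ_{L_k}(v)}` are independent. -/
theorem statement11 {d N : ℕ} (hd : 1 ≤ d) (hN : 2 ≤ N)
    (n : ℕ) (hn1 : 1 ≤ n) (hnN : n ≤ N)
    {Ω : Type} [MeasurableSpace Ω] (P : Measure Ω) [IsProbabilityMeasure P]
    (V : Pt d → Ω → ℝ) (hVmeas : ∀ a, Measurable (V a))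
    (μ : Measure ℝ) [IsProbabilityMeasure μ]
    (hiid : iIndepFun V P)
    (hlaw : ∀ a, P.map (V a) = μ)
    (M : ℝ) (hM : 0 < M) (hsupp : μ (Set.Icc (-M) M) = 1)
    (ρ κ : ℝ) (hρ : 0 < ρ) (hκ : 0 < κ)
    (hHolder : ∃ κ0 > 0, ∀ a b : ℝ, a ≤ b → b - a ≤ κ0 →
        μ (Set.Icc a b) ≤ ENNReal.ofReal (κ⁻¹ * (b - a) ^ ρ))
    (U : Pt d → Pt d → ℝ) (r0 : ℕ) (hr0 : 1 ≤ r0) (M1 : ℝ)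
    (hUbdd : ∀ x x', |U x x'| ≤ M1) (hUsym : ∀ x x', U x x' = U x' x)
    (hUfin : ∀ x x', (r0 : ℕ) ≤ ptNorm (x - x') → U x x' = 0)
    (g r : ℝ)
    (L0 : ℕ) (hL0 : 8 * r0 < L0) (k : ℕ) (u v : Cfg n d)
    (hFIu : IsFI r0 (Lscale L0 k) u) (hFIv : IsFI r0 (Lscale L0 k) v)
    (hdist : 11 * n * Lscale L0 k ≤ cfgNorm (u - v)) :
    CompletelySeparable r0 (Lscale L0 k) u v ∧
    IndepFun
      (fun ω => restrictKer (cube (Lscale L0 k) u) (ham g r U fun a => V a ω))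
      (fun ω => restrictKer (cube (Lscale L0 k) v) (ham g r U fun a => V a ω)) P :=
  statement11_general n P V hVmeas hiid U r0 g r L0 hL0 k u v hFIu hFIv hdist

end MP
end

section
/- Suppose L₀ is large enough and assume that property (SS.N.I.k.n) holds. Then for any n-particle cube Λ_{L_{k+1}}^{(n)}(u), ℙ{K_{FI}(Λ_{L_{k+1}}^{(n)}(u)) ≥ 12} ≤ C'(n,d) L_{k+1}^{−(7/3)p^{(n)}}. -/
/-!
Twelve pairwise separable, fully interactive cubes of radius `L_k` have pairwise disjoint
one-particle projections once `L_k ≥ 11 r₀`: the centre of a fully interactive cube lies within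
`2n(L_k + r₀)` of the diagonal, so two of them whose projections meet have centres at distance
at most `8n(L_k + r₀) + 2L_k ≤ 11nL_k`, contradicting separability. Grouping the twelve cubes into six pairs, the six events
"both cubes of the pair are singular at a common energy" are functions of the i.i.d. potential
on disjoint sets of sites, hence independent, and each has probability `< L_k^{-2p}` by
`(SS.N.I.k.n)`. A union bound over at most `(2L_{k+1} + 1)^{12nd}` choices of centres gives
`(3L_{k+1})^{12nd} L_k^{-12p} = 3^{12nd} L_{k+1}^{12nd - 3p} ≤ 3^{12nd} L_{k+1}^{-7p/3}`,
because `p ≥ 18nd`.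

The events involve an uncountable union over the energy. They are measurable because the set
of (potential, energy) at which a cube is nonsingular is a `G_δ` (the Green's function is the
continuous matrix inverse where the determinant does not vanish), and the projection of an
`F_σ` subset of a finite-dimensional space is `σ`-compact.
-/

open MeasureTheory ProbabilityTheory

namespace MP

open Function

lemma _root_.IsSigmaCompact.measurableSet {Y : Type*} [TopologicalSpace Y] [T2Space Y]
    [MeasurableSpace Y] [OpensMeasurableSpace Y] {s : Set Y} (hs : IsSigmaCompact s) :
    MeasurableSet s := by
  obtain ⟨K, hK, rfl⟩ := hs
  exact MeasurableSet.iUnion fun m => (hK m).measurableSet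

lemma measurableSet_image_of_isGδ_compl {X Y : Type*} [TopologicalSpace X] [SigmaCompactSpace X]
    [TopologicalSpace Y] [T2Space Y] [MeasurableSpace Y] [OpensMeasurableSpace Y]
    {f : X → Y} (hf : Continuous f) {s : Set X} (hs : IsGδ sᶜ) : MeasurableSet (f '' s) := by
  obtain ⟨T, hTopen, hTcount, hT⟩ := hs
  rw [← compl_compl s, hT, Set.compl_sInter, Set.sUnion_image, Set.image_iUnion₂]
  refine MeasurableSet.biUnion hTcount fun t ht => ?_
  exact IsSigmaCompact.measurableSet ((isSigmaCompact_univ.of_isClosed_subset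
    (hTopen t ht).isClosed_compl (Set.subset_univ _)).image hf)

section Independence

variable {Ω ι β : Type*} [MeasurableSpace Ω] [MeasurableSpace β] {P : Measure Ω}
  {f : ι → Ω → β}

lemma _root_.ProbabilityTheory.iIndepFun.measure_iInter_preimage_restrict_eq_prod
    (hf : ∀ i, Measurable (f i)) (hind : iIndepFun f P) {m : ℕ} {S : Fin m → Finset ι}
    (hS : Pairwise (Disjoint on S))
    {B : ∀ j, Set (S j → β)} (hB : ∀ j, MeasurableSet (B j)) :
    P (⋂ j, (fun ω (i : S j) => f i ω) ⁻¹' B j) =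
      ∏ j, P ((fun ω (i : S j) => f i ω) ⁻¹' B j) := by
  classical
  have := hind.isProbabilityMeasure
  induction m with
  | zero => simp
  | succ m ih =>
    set T := Finset.univ.biUnion fun j : Fin m => S j.succ
    have hsub : ∀ j (i : S (Fin.succ j)), (i : ι) ∈ T := fun j i =>
      Finset.mem_biUnion.mpr ⟨j, Finset.mem_univ j, i.2⟩
    set B' : Set (T → β) := ⋂ j : Fin m, (fun h (i : S j.succ) => h ⟨i, hsub j i⟩) ⁻¹' B j.succ
    have hB' : MeasurableSet B' := MeasurableSet.iInter fun j =>
      (hB j.succ).preimage (measurable_pi_lambda _ fun i => measurable_pi_apply _)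
    have hrest : ⋂ j : Fin m, (fun ω (i : S j.succ) => f i ω) ⁻¹' B j.succ =
        (fun ω (i : T) => f i ω) ⁻¹' B' := by
      ext ω
      simp only [B', Set.mem_iInter, Set.mem_preimage]
    have hindep : IndepFun (fun ω (i : S 0) => f i ω) (fun ω (i : T) => f i ω) P :=
      hind.indepFun_finset _ _ ((Finset.disjoint_biUnion_right _ _ _).mpr fun j _ =>
        hS (Fin.succ_ne_zero j).symm) hf
    have hsplit : ⋂ j, (fun ω (i : S j) => f i ω) ⁻¹' B j =
        (fun ω (i : S 0) => f i ω) ⁻¹' B 0 ∩ (fun ω (i : T) => f i ω) ⁻¹' B' := by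
      rw [← hrest]
      ext ω
      simp only [Set.mem_iInter, Set.mem_inter_iff]
      exact Fin.forall_fin_succ
    rw [hsplit,
      indepFun_iff_measure_inter_preimage_eq_mul.mp hindep _ _ (hB 0) hB', ← hrest,
      ih (hS.comp_of_injective (Fin.succ_injective m)) fun j => hB j.succ, Fin.prod_univ_succ]

end Independence

lemma two_mul_add_one_pow_mul_rpow_le {X : ℝ} (hX : 1 ≤ X) {a : ℕ} {p : ℝ}
    (ha : 3 * (a : ℝ) ≤ 2 * p) :
    (2 * X + 1) ^ a * X ^ (-(3 * p)) ≤ 3 ^ a * X ^ (-(7 / 3 * p)) := by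
  have hX0 : 0 < X := by linarith
  calc (2 * X + 1) ^ a * X ^ (-(3 * p)) ≤ (3 * X) ^ a * X ^ (-(3 * p)) := by
        gcongr
        linarith
    _ = 3 ^ a * X ^ ((a : ℝ) + -(3 * p)) := by
        rw [mul_pow, Real.rpow_add hX0, Real.rpow_natCast, mul_assoc]
    _ ≤ 3 ^ a * X ^ (-(7 / 3 * p)) := by
        gcongr
        linarith

section Geometry

variable {n d : ℕ}

lemma natCast_ptNorm (x : Pt d) : (ptNorm x : ℝ) = ‖x‖ := by
  rw [Pi.norm_def, ptNorm, ← NNReal.coe_natCast, Nat.cast_finsetSup]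
  congr 2
  ext i
  simp [Int.norm_eq_abs]

lemma natCast_cfgNorm (x : Cfg n d) : (cfgNorm x : ℝ) = ‖x‖ := by
  rw [Pi.norm_def, cfgNorm, ← NNReal.coe_natCast, Nat.cast_finsetSup]
  congr 2
  ext j
  rw [coe_nnnorm, ← natCast_ptNorm, NNReal.coe_natCast]

lemma mem_cube_iff_dist_le {L : ℕ} {x u : Cfg n d} : x ∈ cube L u ↔ dist x u ≤ L := by
  simp only [cube, Finset.mem_Icc, Pi.le_def, dist_pi_le_iff (Nat.cast_nonneg L),
    Int.dist_eq, abs_sub_le_iff, ← forall_and]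
  norm_cast
  exact forall₂_congr fun j i => by omega

lemma exists_dist_le_of_diagDist_le {u : Cfg n d} {B : ℕ} (h : diagDist u ≤ B) :
    ∃ p : Pt d, ∀ j, dist (u j) p ≤ B := by
  have hne : {m : ℕ | ∃ x : Pt d, ∀ j, ptNorm (u j - x) ≤ m}.Nonempty :=
    ⟨cfgNorm u, 0, fun j => by
      rw [sub_zero]; exact Finset.le_sup (f := fun j => ptNorm (u j)) (Finset.mem_univ j)⟩
  obtain ⟨p, hp⟩ := Nat.sInf_mem hne
  refine ⟨p, fun j => ?_⟩
  rw [dist_eq_norm, ← natCast_ptNorm]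
  exact_mod_cast (hp j).trans h

lemma exists_dist_le_of_mem_projFull {L : ℕ} {x : Cfg n d} {a : Pt d}
    (ha : a ∈ projFull (cube L x)) : ∃ j, dist a (x j) ≤ L := by
  simp only [projFull, projJ, Finset.mem_biUnion, Finset.mem_image] at ha
  obtain ⟨j, -, ξ, hξ, rfl⟩ := ha
  exact ⟨j, (dist_le_pi_dist ξ x j).trans (mem_cube_iff_dist_le.mp hξ)⟩

lemma disjoint_projFull_cube_of_isFI {r0 L : ℕ} (hn : 1 ≤ n) (hL : 11 * r0 ≤ L)
    {x y : Cfg n d} (hxy : 11 * n * L < cfgNorm (x - y))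
    (hx : IsFI r0 L x) (hy : IsFI r0 L y) :
    Disjoint (projFull (cube L x)) (projFull (cube L y)) := by
  rw [Finset.disjoint_left]
  intro a hax hay
  obtain ⟨j₁, hxa⟩ := exists_dist_le_of_mem_projFull hax
  obtain ⟨j₂, hya⟩ := exists_dist_le_of_mem_projFull hay
  obtain ⟨p, hp⟩ := exists_dist_le_of_diagDist_le hx
  obtain ⟨q, hq⟩ := exists_dist_le_of_diagDist_le hy
  set K : ℝ := ((2 * n * (L + r0) : ℕ) : ℝ)
  have hdist : dist x y ≤ 4 * K + 2 * L := by
    refine (dist_pi_le_iff (by positivity)).mpr fun j => ?_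
    linarith [dist_triangle4 (x j) p (x j₁) a, dist_triangle4 a (y j₂) q (y j),
      dist_triangle (x j) a (y j), hp j, hp j₁, hq j₂, hq j,
      dist_comm p (x j₁), dist_comm (x j₁) a, dist_comm q (y j)]
  have hLn : 4 * K + 2 * L ≤ (11 * n * L : ℕ) := by
    simp only [K]
    push_cast
    have : (1 : ℝ) ≤ n := by exact_mod_cast hn
    have : 11 * (r0 : ℝ) ≤ L := by exact_mod_cast hL
    nlinarith
  rw [← Nat.cast_lt (α := ℝ), natCast_cfgNorm, ← dist_eq_norm] at hxy
  linarith

end Geometry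

section GreenMatrix

variable {n d : ℕ} (Λ : Finset (Cfg n d))

def shiftMat (H : Cfg n d → Cfg n d → ℝ) (E : ℝ) : Matrix Λ Λ ℝ :=
  fun a b => H a b - if (a : Cfg n d) = b then E else 0

def restrictMat (G : Cfg n d → Cfg n d → ℝ) : Matrix Λ Λ ℝ := fun a b => G a b

def kerOfMatrix (B : Matrix Λ Λ ℝ) : Cfg n d → Cfg n d → ℝ :=
  fun x y => if h : x ∈ Λ ∧ y ∈ Λ then B ⟨x, h.1⟩ ⟨y, h.2⟩ else 0

variable {Λ}

lemma restrictMat_kerOfMatrix (B : Matrix Λ Λ ℝ) : restrictMat Λ (kerOfMatrix Λ B) = B := by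
  ext a b
  simp [restrictMat, kerOfMatrix]

lemma kerOfMatrix_restrictMat {G : Cfg n d → Cfg n d → ℝ}
    (hG : ∀ x y, (x ∉ Λ ∨ y ∉ Λ) → G x y = 0) : kerOfMatrix Λ (restrictMat Λ G) = G := by
  ext x y
  unfold kerOfMatrix restrictMat
  split_ifs with h
  · rfl
  · exact (hG x y (not_and_or.mp h)).symm

lemma shiftMat_mul_restrictMat_apply (H G : Cfg n d → Cfg n d → ℝ) (E : ℝ) (a b : Λ) :
    (shiftMat Λ H E * restrictMat Λ G) a b =
      ∑ z ∈ Λ, (H a z - if (a : Cfg n d) = z then E else 0) * G z b :=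
  Finset.sum_coe_sort Λ fun z => (H a z - if (a : Cfg n d) = z then E else 0) * G z b

lemma restrictMat_mul_shiftMat_apply (H G : Cfg n d → Cfg n d → ℝ) (E : ℝ) (a b : Λ) :
    (restrictMat Λ G * shiftMat Λ H E) a b =
      ∑ z ∈ Λ, G a z * (H z b - if z = (b : Cfg n d) then E else 0) :=
  Finset.sum_coe_sort Λ fun z => G a z * (H z b - if z = (b : Cfg n d) then E else 0)

lemma isGreen_iff_mul_eq_one {H G : Cfg n d → Cfg n d → ℝ} {E : ℝ} :
    IsGreen Λ H E G ↔ (∀ x y, (x ∉ Λ ∨ y ∉ Λ) → G x y = 0) ∧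
      shiftMat Λ H E * restrictMat Λ G = 1 ∧ restrictMat Λ G * shiftMat Λ H E = 1 := by
  simp only [IsGreen, ← Matrix.ext_iff, shiftMat_mul_restrictMat_apply,
    restrictMat_mul_shiftMat_apply, Matrix.one_apply, Subtype.ext_iff, Subtype.forall]

lemma isGreen_iff_isUnit_det {H G : Cfg n d → Cfg n d → ℝ} {E : ℝ} :
    IsGreen Λ H E G ↔
      IsUnit (shiftMat Λ H E).det ∧ G = kerOfMatrix Λ (shiftMat Λ H E)⁻¹ := by
  rw [isGreen_iff_mul_eq_one]
  constructor
  · rintro ⟨hG, hmul, -⟩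
    refine ⟨Matrix.isUnit_det_of_right_inverse hmul, ?_⟩
    rw [Matrix.inv_eq_right_inv hmul, kerOfMatrix_restrictMat hG]
  · rintro ⟨hdet, rfl⟩
    refine ⟨fun x y hxy => dif_neg (by tauto), ?_, ?_⟩
    · rw [restrictMat_kerOfMatrix, Matrix.mul_nonsing_inv _ hdet]
    · rw [restrictMat_kerOfMatrix, Matrix.nonsing_inv_mul _ hdet]

lemma isNS_iff_isUnit_det {C0 τ δ s0 rn : ℝ} {L : ℕ} {H : Cfg n d → Cfg n d → ℝ} {E : ℝ} :
    IsNS C0 τ δ s0 rn L Λ H E ↔ IsUnit (shiftMat Λ H E).det ∧ ∀ s : ℝ, s0 ≤ s → s ≤ rn →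
      sobNorm C0 Λ (kerOfMatrix Λ (shiftMat Λ H E)⁻¹) s ≤ (L : ℝ) ^ (τ + δ * s) := by
  simp only [IsNS, isGreen_iff_isUnit_det]
  constructor
  · rintro ⟨G, ⟨hdet, rfl⟩, hbound⟩
    exact ⟨hdet, hbound⟩
  · rintro ⟨hdet, hbound⟩
    exact ⟨_, ⟨hdet, rfl⟩, hbound⟩

end GreenMatrix

section GreenContinuity

variable {n d : ℕ} {Λ : Finset (Cfg n d)}

lemma continuous_sobNorm (C0 s : ℝ) :
    Continuous fun K : Cfg n d → Cfg n d → ℝ => sobNorm C0 Λ K s := by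
  unfold sobNorm
  refine Real.continuous_sqrt.comp (continuous_const.mul (continuous_finsetSum _ fun v _ => ?_))
  refine ((NNReal.continuous_coe.comp (Continuous.finset_sup_apply fun p _ => ?_)).pow 2).mul
    continuous_const
  exact ((continuous_apply p.2).comp (continuous_apply p.1)).nnnorm

lemma continuous_kerOfMatrix : Continuous (kerOfMatrix Λ) := by
  refine continuous_pi fun x => continuous_pi fun y => ?_
  unfold kerOfMatrix
  split_ifs with h
  · exact (continuous_apply _).comp (continuous_apply _)
  · exact continuous_const

lemma continuousOn_matrix_inv :
    ContinuousOn Inv.inv {A : Matrix Λ Λ ℝ | A.det ≠ 0} := fun A hA =>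
  (continuousAt_matrix_inv A (by rw [Ring.inverse_eq_inv']; exact continuousAt_inv₀ hA))
    |>.continuousWithinAt

lemma isGδ_setOf_isUnit_det_and_sobNorm_le {X : Type*} [TopologicalSpace X]
    [PerfectlyNormalSpace X] {A : X → Matrix Λ Λ ℝ} (hA : Continuous A) (C0 s0 rn : ℝ)
    (c : ℝ → ℝ) :
    IsGδ {z | IsUnit (A z).det ∧ ∀ s, s0 ≤ s → s ≤ rn →
      sobNorm C0 Λ (kerOfMatrix Λ (A z)⁻¹) s ≤ c s} := by
  set D := {z | (A z).det ≠ 0}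
  have hD : IsOpen D := isOpen_ne_fun hA.matrix_det continuous_const
  have hbad : IsOpen (⋃ s ∈ Set.Icc s0 rn,
      D ∩ (fun z => sobNorm C0 Λ (kerOfMatrix Λ (A z)⁻¹) s) ⁻¹' Set.Ioi (c s)) := by
    refine isOpen_biUnion fun s _ => ContinuousOn.isOpen_inter_preimage ?_ hD isOpen_Ioi
    exact ((continuous_sobNorm C0 s).comp continuous_kerOfMatrix).comp_continuousOn
      (continuousOn_matrix_inv.comp hA.continuousOn fun z hz => hz)
  have heq : {z | IsUnit (A z).det ∧ ∀ s, s0 ≤ s → s ≤ rn →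
      sobNorm C0 Λ (kerOfMatrix Λ (A z)⁻¹) s ≤ c s} =
      D ∩ (⋃ s ∈ Set.Icc s0 rn,
        D ∩ (fun z => sobNorm C0 Λ (kerOfMatrix Λ (A z)⁻¹) s) ⁻¹' Set.Ioi (c s))ᶜ := by
    ext z
    simp +contextual [D, isUnit_iff_ne_zero]
  rw [heq]
  exact hD.isGδ.inter hbad.isClosed_compl.isGδ

end GreenContinuity

section Locality

variable {n d : ℕ} {Λ : Finset (Cfg n d)}

lemma shiftMat_congr {H H' : Cfg n d → Cfg n d → ℝ} (h : ∀ x ∈ Λ, ∀ y ∈ Λ, H x y = H' x y)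
    (E : ℝ) : shiftMat Λ H E = shiftMat Λ H' E := by
  ext a b
  simp only [shiftMat, h a a.2 b b.2]

lemma ham_congr {g r : ℝ} {U : Pt d → Pt d → ℝ} {v v' : Pt d → ℝ}
    (hv : ∀ a ∈ projFull Λ, v a = v' a) {x : Cfg n d} (hx : x ∈ Λ) (y : Cfg n d) :
    ham g r U v x y = ham g r U v' x y := by
  have hsum : ∑ j, v (x j) = ∑ j, v' (x j) := Finset.sum_congr rfl fun j _ =>
    hv _ (Finset.mem_biUnion.mpr ⟨j, Finset.mem_univ j, Finset.mem_image_of_mem _ hx⟩)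
  simp only [ham, hsum]

lemma isNS_ham_congr {C0 τ δ s0 rn : ℝ} {L : ℕ} {g r : ℝ} {U : Pt d → Pt d → ℝ}
    {v v' : Pt d → ℝ} (hv : ∀ a ∈ projFull Λ, v a = v' a) (E : ℝ) :
    IsNS C0 τ δ s0 rn L Λ (ham g r U v) E ↔ IsNS C0 τ δ s0 rn L Λ (ham g r U v') E := by
  simp only [isNS_iff_isUnit_det,
    shiftMat_congr (fun x hx y _ => ham_congr (g := g) (r := r) (U := U) hv hx y) E]

end Locality

section Measurability

variable {n d : ℕ}

def extendZero (S : Finset (Pt d)) (f : S → ℝ) : Pt d → ℝ :=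
  fun a => if h : a ∈ S then f ⟨a, h⟩ else 0

lemma continuous_extendZero_apply (S : Finset (Pt d)) (a : Pt d) :
    Continuous fun f : S → ℝ => extendZero S f a := by
  unfold extendZero
  split_ifs
  · exact continuous_apply _
  · exact continuous_const

variable (g r : ℝ) (U : Pt d → Pt d → ℝ) (S : Finset (Pt d))

lemma continuous_shiftMat_ham (Λ : Finset (Cfg n d)) :
    Continuous fun z : (S → ℝ) × ℝ => shiftMat Λ (ham g r U (extendZero S z.1)) z.2 := by
  refine continuous_matrix fun a b => ?_
  simp only [shiftMat, ham]
  split_ifs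
  · exact (continuous_const.add (continuous_finsetSum _ fun j _ =>
      (continuous_extendZero_apply S _).comp continuous_fst)).sub continuous_snd
  · exact continuous_const

lemma measurableSet_setOf_exists_not_isNS (C0 τ δ s0 rn : ℝ) (L : ℕ) {I : Set ℝ}
    (hI : IsClosed I) (Λ₁ Λ₂ : Finset (Cfg n d)) :
    MeasurableSet {f : S → ℝ | ∃ E ∈ I,
      ¬ IsNS C0 τ δ s0 rn L Λ₁ (ham g r U (extendZero S f)) E ∧
      ¬ IsNS C0 τ δ s0 rn L Λ₂ (ham g r U (extendZero S f)) E} := by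
  have hNS : ∀ Λ : Finset (Cfg n d),
      IsGδ {z : (S → ℝ) × ℝ | IsNS C0 τ δ s0 rn L Λ (ham g r U (extendZero S z.1)) z.2} := by
    intro Λ
    simp only [isNS_iff_isUnit_det]
    exact isGδ_setOf_isUnit_det_and_sobNorm_le (continuous_shiftMat_ham g r U S Λ) _ _ _ _
  have himage : {f : S → ℝ | ∃ E ∈ I,
      ¬ IsNS C0 τ δ s0 rn L Λ₁ (ham g r U (extendZero S f)) E ∧
      ¬ IsNS C0 τ δ s0 rn L Λ₂ (ham g r U (extendZero S f)) E} =
      Prod.fst '' ({z | z.2 ∈ I} ∩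
        {z : (S → ℝ) × ℝ | IsNS C0 τ δ s0 rn L Λ₁ (ham g r U (extendZero S z.1)) z.2}ᶜ ∩
        {z : (S → ℝ) × ℝ | IsNS C0 τ δ s0 rn L Λ₂ (ham g r U (extendZero S z.1)) z.2}ᶜ) := by
    ext f
    simp [and_assoc]
  rw [himage]
  refine measurableSet_image_of_isGδ_compl continuous_fst ?_
  simp only [Set.compl_inter, compl_compl]
  exact ((hI.isOpen_compl.preimage continuous_snd).isGδ.union (hNS Λ₁)).union (hNS Λ₂)

end Measurability

section SingularPairs

variable {n d : ℕ} {Ω : Type} (C0 τ s0 rn : ℝ) (I : Set ℝ) (g r : ℝ)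
  (U : Pt d → Pt d → ℝ) (V : Pt d → Ω → ℝ) (L : ℕ)

def singularPairEvent (x y : Cfg n d) : Set Ω :=
  {ω | ∃ E ∈ I,
    ¬ IsNS C0 τ (1/2) s0 rn L (cube L x) (ham g r U fun a => V a ω) E ∧
    ¬ IsNS C0 τ (1/2) s0 rn L (cube L y) (ham g r U fun a => V a ω) E}

lemma singularPairEvent_eq_preimage {x y : Cfg n d} {S : Finset (Pt d)}
    (hS : projFull (cube L x) ∪ projFull (cube L y) ⊆ S) :
    singularPairEvent C0 τ s0 rn I g r U V L x y =
      (fun ω (a : S) => V a ω) ⁻¹' {f | ∃ E ∈ I,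
        ¬ IsNS C0 τ (1/2) s0 rn L (cube L x) (ham g r U (extendZero S f)) E ∧
        ¬ IsNS C0 τ (1/2) s0 rn L (cube L y) (ham g r U (extendZero S f)) E} := by
  have hagree : ∀ ω, ∀ a ∈ projFull (cube L x) ∪ projFull (cube L y),
      V a ω = extendZero S (fun b : S => V b ω) a := fun ω a ha => by
    simp only [extendZero, dif_pos (hS ha)]
  ext ω
  simp only [singularPairEvent, Set.mem_ofPred_eq, Set.mem_preimage,
    isNS_ham_congr (fun a ha => hagree ω a (Finset.mem_union_left _ ha)),
    isNS_ham_congr (fun a ha => hagree ω a (Finset.mem_union_right _ ha))]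

variable {C0 τ s0 rn I g r U V L}

lemma measure_iInter_singularPairEvent_le [MeasurableSpace Ω] {P : Measure Ω}
    (hV : ∀ a, Measurable (V a)) (hiid : iIndepFun V P) (hI : IsClosed I) {r0 : ℕ} {p : ℝ}
    (hSS : SSprop n P V g r U C0 τ s0 rn I r0 L p) {m : ℕ} (x y : Fin m → Cfg n d)
    (hsep : ∀ j, Separable r0 L (x j) (y j))
    (hdisj : Pairwise (Disjoint on fun j =>
      projFull (cube L (x j)) ∪ projFull (cube L (y j)))) :
    P (⋂ j, singularPairEvent C0 τ s0 rn I g r U V L (x j) (y j)) ≤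
      ENNReal.ofReal ((L : ℝ) ^ (-(2 * p))) ^ m := by
  set S := fun j => projFull (cube L (x j)) ∪ projFull (cube L (y j))
  simp only [singularPairEvent_eq_preimage C0 τ s0 rn I g r U V L (S := S _) subset_rfl]
  rw [hiid.measure_iInter_preimage_restrict_eq_prod hV hdisj fun j =>
    measurableSet_setOf_exists_not_isNS g r U _ _ _ _ _ _ _ hI _ _]
  simp only [← singularPairEvent_eq_preimage C0 τ s0 rn I g r U V L (S := S _) subset_rfl]
  calc ∏ j, P (singularPairEvent C0 τ s0 rn I g r U V L (x j) (y j))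
      ≤ ∏ _j : Fin m, ENNReal.ofReal ((L : ℝ) ^ (-(2 * p))) :=
        Finset.prod_le_prod' fun j _ => (hSS _ _ (hsep j)).le
    _ = _ := by rw [Finset.prod_const, Finset.card_univ, Fintype.card_fin]

end SingularPairs

lemma card_cube {n d : ℕ} (L : ℕ) (u : Cfg n d) : (cube L u).card = (2 * L + 1) ^ (n * d) := by
  have hside : ∀ j i, (u j i + L + 1 - (u j i - L)).toNat = 2 * L + 1 := fun j i => by omega
  simp only [cube, Pi.card_Icc, Int.card_Icc, hside, Finset.prod_const, Finset.card_univ,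
    Fintype.card_fin, ← pow_mul, Nat.mul_comm d n]

section Counting

variable {n d : ℕ} {Ω : Type} [MeasurableSpace Ω] {C0 τ s0 rn : ℝ} {I : Set ℝ} {g r : ℝ}
  {U : Pt d → Pt d → ℝ} {V : Pt d → Ω → ℝ} {L : ℕ}

lemma measure_exists_isFI_singular_le {P : Measure Ω} (hn : 1 ≤ n)
    (hV : ∀ a, Measurable (V a)) (hiid : iIndepFun V P) (hI : IsClosed I) {r0 : ℕ} {p : ℝ}
    (hL : 11 * r0 ≤ L) (hSS : SSprop n P V g r U C0 τ s0 rn I r0 L p) (m L' : ℕ)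
    (u : Cfg n d) :
    P {ω | ∃ E ∈ I, ∃ w : Fin (m * 2) → Cfg n d,
        (∀ i, cube L (w i) ⊆ cube L' u) ∧ (∀ i, IsFI r0 L (w i)) ∧
        (∀ i j, i ≠ j → Separable r0 L (w i) (w j)) ∧
        (∀ i, ¬ IsNS C0 τ (1/2) s0 rn L (cube L (w i)) (ham g r U fun a => V a ω) E)} ≤
      (((2 * L' + 1) ^ (n * d)) ^ (m * 2) : ℕ) *
        ENNReal.ofReal ((L : ℝ) ^ (-(2 * p))) ^ m := by
  classical
  set W := (Fintype.piFinset fun _ : Fin (m * 2) => cube L' u).filter fun w =>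
    (∀ i, IsFI r0 L (w i)) ∧ ∀ i j, i ≠ j → Separable r0 L (w i) (w j)
  let e : Fin m × Fin 2 ≃ Fin (m * 2) := finProdFinEquiv
  have hpair : ∀ w ∈ W, P (⋂ j, singularPairEvent C0 τ s0 rn I g r U V L
      (w (e (j, 0))) (w (e (j, 1)))) ≤ ENNReal.ofReal ((L : ℝ) ^ (-(2 * p))) ^ m := by
    intro w hw
    obtain ⟨-, hFI, hsep⟩ := Finset.mem_filter.mp hw
    have hproj : ∀ i j : Fin m, i ≠ j → ∀ b b' : Fin 2,
        Disjoint (projFull (cube L (w (e (i, b))))) (projFull (cube L (w (e (j, b'))))) :=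
      fun i j hij b b' => disjoint_projFull_cube_of_isFI hn hL
        (hsep _ _ (e.injective.ne (by simp [hij]))).2 (hFI _) (hFI _)
    refine measure_iInter_singularPairEvent_le hV hiid hI hSS _ _
      (fun j => hsep _ _ (e.injective.ne (by simp))) fun i j hij => ?_
    exact Finset.disjoint_union_left.mpr
      ⟨Finset.disjoint_union_right.mpr ⟨hproj i j hij 0 0, hproj i j hij 0 1⟩,
        Finset.disjoint_union_right.mpr ⟨hproj i j hij 1 0, hproj i j hij 1 1⟩⟩
  have hcard : W.card ≤ ((2 * L' + 1) ^ (n * d)) ^ (m * 2) := by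
    calc W.card ≤ (Fintype.piFinset fun _ : Fin (m * 2) => cube L' u).card :=
          Finset.card_filter_le _ _
      _ = _ := by simp [Fintype.card_piFinset, card_cube]
  calc _ ≤ P (⋃ w ∈ W, ⋂ j, singularPairEvent C0 τ s0 rn I g r U V L
          (w (e (j, 0))) (w (e (j, 1)))) := by
        refine measure_mono fun ω ⟨E, hE, w, hsub, hFI, hsep, hsing⟩ => ?_
        refine Set.mem_biUnion (Finset.mem_filter.mpr ⟨Fintype.mem_piFinset.mpr fun i =>
          hsub i (mem_cube_iff_dist_le.mpr (by simp)), hFI, hsep⟩) ?_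
        exact Set.mem_iInter.mpr fun j => ⟨E, hE, hsing _, hsing _⟩
    _ ≤ ∑ w ∈ W, P (⋂ j, singularPairEvent C0 τ s0 rn I g r U V L
          (w (e (j, 0))) (w (e (j, 1)))) := measure_biUnion_finset_le _ _
    _ ≤ W.card • ENNReal.ofReal ((L : ℝ) ^ (-(2 * p))) ^ m :=
        Finset.sum_le_card_nsmul _ _ _ hpair
    _ ≤ _ := by
      rw [nsmul_eq_mul]
      gcongr

end Counting

lemma Lscale_succ (L0 k : ℕ) : Lscale L0 (k + 1) = Lscale L0 k ^ 4 := by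
  rw [Lscale, Lscale, pow_succ, pow_mul]

lemma natCast_mul_ofReal_rpow_pow_le {L : ℕ} (hL : 1 ≤ L) {a : ℕ} {p : ℝ}
    (ha : 3 * (a : ℝ) ≤ 2 * p) :
    (((2 * L ^ 4 + 1) ^ a : ℕ) : ENNReal) * ENNReal.ofReal ((L : ℝ) ^ (-(2 * p))) ^ 6 ≤
      ENNReal.ofReal (3 ^ a * ((L ^ 4 : ℕ) : ℝ) ^ (-(7 / 3 * p))) := by
  have hL0 : (0 : ℝ) ≤ L := Nat.cast_nonneg L
  have hpow : ((L : ℝ) ^ (-(2 * p))) ^ 6 = ((L ^ 4 : ℕ) : ℝ) ^ (-(3 * p)) := by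
    rw [← Real.rpow_natCast _ 6, ← Real.rpow_mul hL0, Nat.cast_pow, ← Real.rpow_natCast _ 4,
      ← Real.rpow_mul hL0]
    ring_nf
  rw [← ENNReal.ofReal_natCast, ← ENNReal.ofReal_pow (by positivity), hpow,
    ← ENNReal.ofReal_mul (by positivity)]
  refine ENNReal.ofReal_le_ofReal ?_
  push_cast
  exact two_mul_add_one_pow_mul_rpow_le (one_le_pow₀ (by exact_mod_cast hL)) ha

theorem statement12_general {d N : ℕ}
    (n : ℕ) (hn1 : 1 ≤ n) (hnN : n ≤ N)
    {Ω : Type} [MeasurableSpace Ω] (P : Measure Ω)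
    (V : Pt d → Ω → ℝ) (hVmeas : ∀ a, Measurable (V a))
    (hiid : iIndepFun V P)
    (M : ℝ)
    (U : Pt d → Pt d → ℝ) (r0 : ℕ)
    (r C0 : ℝ)
    (p0 : ℝ) (hp0 : 20 * N * d ≤ p0)
    (τ s0 rn : ℕ → ℝ)
    :
    ∃ Cp : ℝ, 0 < Cp ∧ ∃ L0star gstar : ℝ, 0 < L0star ∧ 0 < gstar ∧
      ∀ L0 : ℕ, L0star ≤ (L0 : ℝ) → ∀ g : ℝ, gstar ≤ |g| → ∀ k : ℕ,
        SSprop (d := d) n P V g r U C0 (τ n) (s0 n) (rn n) (Ibox M N) r0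
          (Lscale L0 k) (pexp N p0 n) →
        ∀ u : Cfg n d,
          P {ω | ∃ E ∈ Ibox M N, ∃ w : Fin 12 → Cfg n d,
              (∀ i, cube (Lscale L0 k) (w i) ⊆ cube (Lscale L0 (k + 1)) u) ∧
              (∀ i, IsFI r0 (Lscale L0 k) (w i)) ∧
              (∀ i j, i ≠ j → Separable r0 (Lscale L0 k) (w i) (w j)) ∧
              (∀ i, ¬ IsNS C0 (τ n) (1/2) (s0 n) (rn n) (Lscale L0 k)
                  (cube (Lscale L0 k) (w i)) (ham g r U fun a => V a ω) E)} ≤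
            ENNReal.ofReal (Cp *
              (Lscale L0 (k + 1) : ℝ) ^ (-(7 / 3 * pexp N p0 n))) := by
  refine ⟨3 ^ (n * d * (6 * 2)), by positivity, 11 * r0 + 1, 1, by positivity, one_pos,
    fun L0 hL0 g _ k hSS u => ?_⟩
  have hL0 : 11 * r0 + 1 ≤ L0 := by exact_mod_cast hL0
  have hL : 11 * r0 + 1 ≤ Lscale L0 k := hL0.trans (Nat.le_self_pow (by positivity) L0)
  have hp : 3 * ((n * d * (6 * 2) : ℕ) : ℝ) ≤ 2 * pexp N p0 n := by
    have hnN' : (n : ℝ) ≤ N := by exact_mod_cast hnN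
    have h18 : (1 : ℝ) ≤ 18 ^ (N - n) := one_le_pow₀ (by norm_num)
    have hp0' : 0 ≤ p0 := le_trans (by positivity) hp0
    push_cast
    unfold pexp
    nlinarith
  calc _ ≤ (((2 * Lscale L0 (k + 1) + 1) ^ (n * d)) ^ (6 * 2) : ℕ) *
        ENNReal.ofReal ((Lscale L0 k : ℝ) ^ (-(2 * pexp N p0 n))) ^ 6 :=
      measure_exists_isFI_singular_le hn1 hVmeas hiid isClosed_Icc (by omega) hSS 6 _ u
    _ ≤ _ := by
      rw [Lscale_succ, ← pow_mul]
      exact natCast_mul_ofReal_rpow_pow_le (by omega) hp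

/-- Lemma 3.8: assuming `(SS.N.I.k.n)`, for any `n`-particle cube
`Λ_{L_{k+1}}(u)`, the probability that it contains (for some `E ∈ I`) twelve pairwise
separable FI `(E,1/2)`-singular cubes of radius `L_k` is at most
`C'(n,d) L_{k+1}^{-(7/3) p^{(n)}}`, for `L₀` large enough. -/
theorem statement12 {d N : ℕ} (hd : 1 ≤ d) (hN : 2 ≤ N)
    (n : ℕ) (hn1 : 1 ≤ n) (hnN : n ≤ N)
    {Ω : Type} [MeasurableSpace Ω] (P : Measure Ω) [IsProbabilityMeasure P]
    (V : Pt d → Ω → ℝ) (hVmeas : ∀ a, Measurable (V a))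
    (μ : Measure ℝ) [IsProbabilityMeasure μ]
    (hiid : iIndepFun V P)
    (hlaw : ∀ a, P.map (V a) = μ)
    (M : ℝ) (hM : 0 < M) (hsupp : μ (Set.Icc (-M) M) = 1)
    (ρ κ : ℝ) (hρ : 0 < ρ) (hκ : 0 < κ)
    (hHolder : ∃ κ0 > 0, ∀ a b : ℝ, a ≤ b → b - a ≤ κ0 →
        μ (Set.Icc a b) ≤ ENNReal.ofReal (κ⁻¹ * (b - a) ^ ρ))
    (U : Pt d → Pt d → ℝ) (r0 : ℕ) (hr0 : 1 ≤ r0) (M1 : ℝ)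
    (hUbdd : ∀ x x', |U x x'| ≤ M1) (hUsym : ∀ x x', U x x' = U x' x)
    (hUfin : ∀ x x', (r0 : ℕ) ≤ ptNorm (x - x') → U x x' = 0)
    (r C0 : ℝ) (hC0 : 0 < C0)
    (p0 β : ℝ) (hp0 : 20 * N * d ≤ p0) (hβ : 18 ^ N * p0 / (2 * ρ) ≤ β)
    (τ s0 rn : ℕ → ℝ)
    (hs0 : ∀ m, 1 ≤ m → m ≤ N → (m * d : ℝ) / 2 < s0 m)
    (hs0rn : ∀ m, 1 ≤ m → m ≤ N → s0 m ≤ rn m)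
    (hrnr : ∀ m, 1 ≤ m → m ≤ N → rn m < r - (m * d : ℝ) / 2)
    (hτβ : ∀ m, 1 ≤ m → m ≤ N → 4 * β + 7 * s0 m < τ m)
    (hrnτ : ∀ m, 1 ≤ m → m ≤ N → 2 * τ m + 4 * s0 m < rn m)
    (hτmono : ∀ m, 2 ≤ m → m ≤ N → τ (m - 1) + 3 * (d : ℝ) / 2 < τ m)
    (hrnmono : ∀ m, 2 ≤ m → m ≤ N → rn m < rn (m - 1) - (d : ℝ) / 2)
    :
    ∃ Cp : ℝ, 0 < Cp ∧ ∃ L0star gstar : ℝ, 0 < L0star ∧ 0 < gstar ∧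
      ∀ L0 : ℕ, L0star ≤ (L0 : ℝ) → ∀ g : ℝ, gstar ≤ |g| → ∀ k : ℕ,
        SSprop (d := d) n P V g r U C0 (τ n) (s0 n) (rn n) (Ibox M N) r0
          (Lscale L0 k) (pexp N p0 n) →
        ∀ u : Cfg n d,
          P {ω | ∃ E ∈ Ibox M N, ∃ w : Fin 12 → Cfg n d,
              (∀ i, cube (Lscale L0 k) (w i) ⊆ cube (Lscale L0 (k + 1)) u) ∧
              (∀ i, IsFI r0 (Lscale L0 k) (w i)) ∧
              (∀ i j, i ≠ j → Separable r0 (Lscale L0 k) (w i) (w j)) ∧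
              (∀ i, ¬ IsNS C0 (τ n) (1/2) (s0 n) (rn n) (Lscale L0 k)
                  (cube (Lscale L0 k) (w i)) (ham g r U fun a => V a ω) E)} ≤
            ENNReal.ofReal (Cp *
              (Lscale L0 (k + 1) : ℝ) ^ (-(7 / 3 * pexp N p0 n))) :=
  statement12_general n hn1 hnN P V hVmeas hiid M U r0 r C0 p0 hp0 τ s0 rn

end MP
end
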